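/- arXiv:1703.04806 — 5 statements merged into one kernel-verified Lean document; each statement's English description precedes it below -/
import Mathlib

section
/- Let T = (S,Σ,κ) be an STS and B ∈ Σ with avoid-set B̃. Then: (i) for every probability measure μ on S with μ(B̃) = 1, Prob_μ(F B) = 0; and (ii) for every probability measure μ on S with μ(S ∖ B̃) > 0, Prob_μ(F B) > 0. -/
open MeasureTheory ProbabilityTheory ENNReal Filter Topology

namespace STS

variable {S : Type*} [MeasurableSpace S]

/-- Probability of the cylinder `Cyl(A 0, …, A n)` for the Markov chain with kernel `κ`
and initial distribution `μ`. -/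
noncomputable def cylProb (κ : Kernel S S) : ℕ → Measure S → (ℕ → Set S) → ℝ≥0∞
  | 0, μ, A => μ (A 0)
  | n + 1, μ, A => ∫⁻ s in A 0, cylProb κ n (κ s) (fun i => A (i + 1)) ∂μ

/-- `P` assigns to each initial (probability) distribution the path measure (on `ℕ → S`,
with the product σ-algebra) of the time-homogeneous Markov chain with transition kernel `κ`,
as given by the Ionescu–Tulcea construction: it is the unique probability measure giving
cylinders their prescribed probabilities. -/
def IsPathMeasure (κ : Kernel S S) (P : Measure S → Measure (ℕ → S)) : Prop :=
  ∀ μ : Measure S, IsProbabilityMeasure μ →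
    IsProbabilityMeasure (P μ) ∧
    ∀ (n : ℕ) (A : ℕ → Set S), (∀ i, MeasurableSet (A i)) →
      P μ {ρ | ∀ i ≤ n, ρ i ∈ A i} = cylProb κ n μ A

/-- The path event `F B`: eventually reach `B`. -/
def evF (B : Set S) : Set (ℕ → S) := {ρ | ∃ k, ρ k ∈ B}

/-- The path event `F≤n B`. -/
def evFle (n : ℕ) (B : Set S) : Set (ℕ → S) := {ρ | ∃ k ≤ n, ρ k ∈ B}

/-- The path event `F≥p B`. -/
def evFge (p : ℕ) (B : Set S) : Set (ℕ → S) := {ρ | ∃ k, p ≤ k ∧ ρ k ∈ B}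

/-- The path event `GF B`: visit `B` infinitely often. -/
def evGF (B : Set S) : Set (ℕ → S) := {ρ | ∀ n, ∃ k, n ≤ k ∧ ρ k ∈ B}

/-- The path event `FG B`: eventually stay in `B` forever. -/
def evFG (B : Set S) : Set (ℕ → S) := {ρ | ∃ n, ∀ k, n ≤ k → ρ k ∈ B}

/-- The until event `B' U B`. -/
def evU (B' B : Set S) : Set (ℕ → S) := {ρ | ∃ k, ρ k ∈ B ∧ ∀ j < k, ρ j ∈ B'}

/-- The bounded until event `B' U≤n B`. -/
def evUle (n : ℕ) (B' B : Set S) : Set (ℕ → S) := {ρ | ∃ k ≤ n, ρ k ∈ B ∧ ∀ j < k, ρ j ∈ B'}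

/-- The avoid-set `B̃` of `B`: states from which `B` is reached with probability `0`. -/
def avoid (P : Measure S → Measure (ℕ → S)) (B : Set S) : Set S :=
  {s | P (Measure.dirac s) (evF B) = 0}

/-- `T` is decisive w.r.t. `B` from `μ`. -/
def Decisive (P : Measure S → Measure (ℕ → S)) (μ : Measure S) (B : Set S) : Prop :=
  P μ (evF B ∪ evF (avoid P B)) = 1

/-- `T` is strongly decisive w.r.t. `B` from `μ`. -/
def StronglyDecisive (P : Measure S → Measure (ℕ → S)) (μ : Measure S) (B : Set S) : Prop :=
  P μ (evGF B ∪ evF (avoid P B)) = 1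

/-- `T` is persistently decisive w.r.t. `B` from `μ`. -/
def PersistentlyDecisive (P : Measure S → Measure (ℕ → S)) (μ : Measure S) (B : Set S) : Prop :=
  ∀ p : ℕ, P μ (evFge p B ∪ evFge p (avoid P B)) = 1

/-- `PreProb(B)`: measurable sets `B'` from which `B` is reached in one step with positive
probability, whatever the initial distribution concentrated on `B'`. -/
def PreProb (P : Measure S → Measure (ℕ → S)) (B : Set S) : Set (Set S) :=
  {B' | MeasurableSet B' ∧ ∀ μ' : Measure S, IsProbabilityMeasure μ' → μ' B' = 1 →
    0 < P μ' {ρ | ρ 0 ∈ B' ∧ ρ 1 ∈ B}}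

/-- `T` is fair w.r.t. `B` from `μ`. -/
def Fair (P : Measure S → Measure (ℕ → S)) (μ : Measure S) (B : Set S) : Prop :=
  ∀ B' ∈ PreProb P B, 0 < P μ (evGF B') →
    P μ (evGF B ∩ evGF B') = P μ (evGF B')

/-- The one-step measure transformer `Ω_T`. -/
noncomputable def Omega (κ : Kernel S S) (μ : Measure S) : Measure S :=
  μ.bind (fun s => κ s)

/-- Two measures are qualitatively equivalent if they have the same null (measurable) sets. -/
def QualEquiv {T : Type*} [MeasurableSpace T] (μ ν : Measure T) : Prop :=
  ∀ A : Set T, MeasurableSet A → (μ A = 0 ↔ ν A = 0)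

/-- `T₂ = (S₂,κ₂)` is an `α`-abstraction of `T₁ = (S₁,κ₁)`. -/
def IsAbstraction {S₁ S₂ : Type*} [MeasurableSpace S₁] [MeasurableSpace S₂]
    (κ₁ : Kernel S₁ S₁) (κ₂ : Kernel S₂ S₂) (α : S₁ → S₂) : Prop :=
  ∀ μ : Measure S₁, IsProbabilityMeasure μ →
    QualEquiv (Measure.map α (Omega κ₁ μ)) (Omega κ₂ (Measure.map α μ))

/-! The probability of reaching `B` from `μ` is the `μ`-average of the probabilities of reaching
`B` from single states. This holds for the cylinders "stay in `Bᶜ` up to time `n`" by unfolding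
`cylProb`, hence for their complements `F≤n B`, and by monotone convergence for
`F B = ⋃ n, F≤n B`. The avoid-set is the zero set of the integrand `s ↦ Prob_{δ_s}(F B)`, so
`Prob_μ(F B)` vanishes exactly when `μ` is concentrated on `B̃`. -/

noncomputable def cylProbFrom (κ : Kernel S S) : ℕ → (ℕ → Set S) → S → ℝ≥0∞
  | 0, A => (A 0).indicator 1
  | n + 1, A => (A 0).indicator fun s => ∫⁻ t, cylProbFrom κ n (fun i => A (i + 1)) t ∂κ s

lemma measurable_cylProbFrom (κ : Kernel S S) (n : ℕ) {A : ℕ → Set S}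
    (hA : ∀ i, MeasurableSet (A i)) : Measurable (cylProbFrom κ n A) := by
  induction n generalizing A with
  | zero => exact measurable_one.indicator (hA 0)
  | succ n ih => exact (ih fun i => hA (i + 1)).lintegral_kernel.indicator (hA 0)

lemma cylProb_eq_lintegral_cylProbFrom (κ : Kernel S S) (n : ℕ) (μ : Measure S)
    {A : ℕ → Set S} (hA : ∀ i, MeasurableSet (A i)) :
    cylProb κ n μ A = ∫⁻ s, cylProbFrom κ n A s ∂μ := by
  induction n generalizing μ A with
  | zero => exact (lintegral_indicator_one (hA 0)).symm
  | succ n ih =>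
    simp only [cylProb, cylProbFrom, lintegral_indicator (hA 0), ih _ fun i => hA (i + 1)]

lemma cylProb_dirac (κ : Kernel S S) (n : ℕ) (s : S) {A : ℕ → Set S}
    (hA : ∀ i, MeasurableSet (A i)) :
    cylProb κ n (Measure.dirac s) A = cylProbFrom κ n A s := by
  rw [cylProb_eq_lintegral_cylProbFrom κ n _ hA, lintegral_dirac' s (measurable_cylProbFrom κ n hA)]

lemma measurableSet_cylinder (n : ℕ) {A : ℕ → Set S} (hA : ∀ i, MeasurableSet (A i)) :
    MeasurableSet {ρ : ℕ → S | ∀ i ≤ n, ρ i ∈ A i} := by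
  simp only [Set.ofPred_forall]
  exact .iInter fun i => .iInter fun _ => measurable_pi_apply i (hA i)

lemma evFle_eq_compl_cylinder {X : Type*} (n : ℕ) (B : Set X) :
    evFle n B = {ρ | ∀ i ≤ n, ρ i ∈ Bᶜ}ᶜ := by
  ext ρ; simp [evFle]

lemma monotone_evFle {X : Type*} (B : Set X) : Monotone fun n => evFle n B :=
  fun _ _ hmn _ ⟨k, hk, hkB⟩ => ⟨k, hk.trans hmn, hkB⟩

lemma evF_eq_iUnion_evFle {X : Type*} (B : Set X) : evF B = ⋃ n, evFle n B := by
  ext ρ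
  simp only [evF, evFle, Set.mem_iUnion, Set.mem_ofPred_eq]
  exact ⟨fun ⟨k, hk⟩ => ⟨k, k, le_rfl, hk⟩, fun ⟨_, k, _, hk⟩ => ⟨k, hk⟩⟩

lemma measure_evF_eq_iSup {X : Type*} [MeasurableSpace X] (ν : Measure (ℕ → X)) (B : Set X) :
    ν (evF B) = ⨆ n, ν (evFle n B) := by
  rw [evF_eq_iUnion_evFle, (monotone_evFle B).measure_iUnion]

section PathMeasure

variable {κ : Kernel S S} {P : Measure S → Measure (ℕ → S)}

lemma measure_cylinder_dirac (hP : IsPathMeasure κ P) (n : ℕ) (s : S) {A : ℕ → Set S}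
    (hA : ∀ i, MeasurableSet (A i)) :
    P (Measure.dirac s) {ρ | ∀ i ≤ n, ρ i ∈ A i} = cylProbFrom κ n A s := by
  rw [(hP _ inferInstance).2 n A hA, cylProb_dirac κ n s hA]

lemma measure_dirac_evFle (hP : IsPathMeasure κ P) (n : ℕ) (s : S) {B : Set S}
    (hB : MeasurableSet B) :
    P (Measure.dirac s) (evFle n B) = 1 - cylProbFrom κ n (fun _ => Bᶜ) s := by
  have := (hP (Measure.dirac s) inferInstance).1
  rw [evFle_eq_compl_cylinder, prob_compl_eq_one_sub (measurableSet_cylinder n fun _ => hB.compl),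
    measure_cylinder_dirac hP n s fun _ => hB.compl]

lemma measurable_measure_dirac_evFle (hP : IsPathMeasure κ P) (n : ℕ) {B : Set S}
    (hB : MeasurableSet B) : Measurable fun s => P (Measure.dirac s) (evFle n B) := by
  simp only [measure_dirac_evFle hP n _ hB]
  exact measurable_const.sub (measurable_cylProbFrom κ n fun _ => hB.compl)

lemma measure_evFle_eq_lintegral_dirac (hP : IsPathMeasure κ P) (μ : Measure S)
    [IsProbabilityMeasure μ] (n : ℕ) {B : Set S} (hB : MeasurableSet B) :
    P μ (evFle n B) = ∫⁻ s, P (Measure.dirac s) (evFle n B) ∂μ := by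
  have := (hP μ inferInstance).1
  have hBc : ∀ _ : ℕ, MeasurableSet Bᶜ := fun _ => hB.compl
  have hcyl : P μ {ρ | ∀ i ≤ n, ρ i ∈ Bᶜ} = ∫⁻ s, cylProbFrom κ n (fun _ => Bᶜ) s ∂μ := by
    rw [(hP μ inferInstance).2 n _ hBc, cylProb_eq_lintegral_cylProbFrom κ n μ hBc]
  have hle : ∀ s, cylProbFrom κ n (fun _ => Bᶜ) s ≤ 1 := fun s => by
    have := (hP (Measure.dirac s) inferInstance).1
    exact measure_cylinder_dirac hP n s hBc ▸ prob_le_one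
  simp only [measure_dirac_evFle hP n _ hB]
  rw [lintegral_sub (measurable_cylProbFrom κ n hBc) (hcyl ▸ measure_ne_top _ _) (.of_forall hle),
    lintegral_one, measure_univ, ← hcyl, ← prob_compl_eq_one_sub (measurableSet_cylinder n hBc),
    evFle_eq_compl_cylinder]

lemma measurable_measure_dirac_evF (hP : IsPathMeasure κ P) {B : Set S}
    (hB : MeasurableSet B) : Measurable fun s => P (Measure.dirac s) (evF B) := by
  simp only [measure_evF_eq_iSup]
  exact .iSup fun n => measurable_measure_dirac_evFle hP n hB

lemma measure_evF_eq_lintegral_dirac (hP : IsPathMeasure κ P) (μ : Measure S)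
    [IsProbabilityMeasure μ] {B : Set S} (hB : MeasurableSet B) :
    P μ (evF B) = ∫⁻ s, P (Measure.dirac s) (evF B) ∂μ := by
  simp only [measure_evF_eq_iSup, measure_evFle_eq_lintegral_dirac hP μ _ hB]
  exact (lintegral_iSup (fun n => measurable_measure_dirac_evFle hP n hB)
    fun _ _ hmn _ => measure_mono (monotone_evFle B hmn)).symm

end PathMeasure

theorem statement_0_general {S : Type*} [MeasurableSpace S]
    (κ : Kernel S S)
    (P : Measure S → Measure (ℕ → S)) (hP : IsPathMeasure κ P)
    (B : Set S) (hB : MeasurableSet B) :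
    (∀ μ : Measure S, IsProbabilityMeasure μ → μ (avoid P B) = 1 → P μ (evF B) = 0) ∧
    (∀ μ : Measure S, IsProbabilityMeasure μ → 0 < μ ((avoid P B)ᶜ) → 0 < P μ (evF B)) := by
  have hreach := measurable_measure_dirac_evF hP hB
  have hsupport : Function.support (fun s => P (Measure.dirac s) (evF B)) = (avoid P B)ᶜ := rfl
  refine ⟨fun μ _ hfull => ?_, fun μ _ hpos => ?_⟩
  · have hnull : μ (avoid P B)ᶜ = 0 :=
      (prob_compl_eq_zero_iff (hreach (measurableSet_singleton 0))).2 hfull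
    rwa [measure_evF_eq_lintegral_dirac hP μ hB, lintegral_eq_zero_iff hreach, EventuallyEq,
      ae_iff]
  · rwa [measure_evF_eq_lintegral_dirac hP μ hB, lintegral_pos_iff_support hreach, hsupport]

/-- properties of the avoid-set `B̃` of a measurable set `B` in an STS:
(i) if `μ(B̃) = 1` then `Prob_μ(F B) = 0`; (ii) if `μ(S ∖ B̃) > 0` then `Prob_μ(F B) > 0`. -/
theorem statement_0 {S : Type*} [MeasurableSpace S]
    (κ : Kernel S S) [IsMarkovKernel κ]
    (P : Measure S → Measure (ℕ → S)) (hP : IsPathMeasure κ P)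
    (B : Set S) (hB : MeasurableSet B) :
    (∀ μ : Measure S, IsProbabilityMeasure μ → μ (avoid P B) = 1 → P μ (evF B) = 0) ∧
    (∀ μ : Measure S, IsProbabilityMeasure μ → 0 < μ ((avoid P B)ᶜ) → 0 < P μ (evF B)) :=
  statement_0_general κ P hP B hB

end STS
end

section
/- Let T = (S,Σ,κ) be an STS and B ∈ Σ. If B is an attractor for T (i.e. Prob_μ(F B) = 1 for every initial probability measure μ on S), then for every initial probability measure μ on S, Prob_μ(GF B) = 1. -/
open MeasureTheory ProbabilityTheory ENNReal Filter Topology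

namespace STS

variable {S : Type*} [MeasurableSpace S]

open Set

/-! Markov property: under `Prob_μ` the shifted path `i ↦ ρ (i + 1)` is the chain started from
the time-one distribution `μ.bind κ`, again a probability measure. Since `F≥(p+1) B` is the
preimage of `F≥p B` under the shift and `B` is an attractor from every initial distribution,
induction on `p` gives `Prob_μ(F≥p B) = 1` for all `p`, and `GF B = ⋂ p, F≥p B`. -/

section Cylinders

variable {X : ℕ → Type*}

lemma squareCylinder_eq_pi_Iic (s : Finset ℕ) (t : ∀ i, Set (X i)) :
    (s : Set ℕ).pi t = (Iic (s.sup id)).pi (fun i => if i ∈ s then t i else univ) := by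
  ext ρ
  simp only [Set.mem_pi, Finset.mem_coe, mem_Iic]
  refine ⟨fun h i _ => ?_, fun h i hi => ?_⟩
  · split_ifs with hi
    · exact h i hi
    · trivial
  · simpa [hi] using h i (Finset.le_sup (f := id) hi)

variable [∀ i, MeasurableSpace (X i)]

lemma measure_ext_of_pi_Iic {ν₁ ν₂ : Measure (∀ i, X i)} [IsFiniteMeasure ν₁]
    (h : ∀ (n : ℕ) (A : ∀ i, Set (X i)), (∀ i, MeasurableSet (A i)) →
      ν₁ ((Iic n).pi A) = ν₂ ((Iic n).pi A)) :
    ν₁ = ν₂ := by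
  refine ext_of_generate_finite _ generateFrom_squareCylinders.symm
    (isPiSystem_squareCylinders (fun _ => MeasurableSpace.isPiSystem_measurableSet)
      fun _ => .univ) ?_ ?_
  · rintro _ ⟨s, t, ht, rfl⟩
    rw [squareCylinder_eq_pi_Iic]
    refine h _ _ fun i => ?_
    split_ifs
    exacts [ht i trivial, .univ]
  · simpa using h 0 (fun _ => univ) fun _ => .univ

end Cylinders

lemma measure_iInter_eq_one {α ι : Type*} [MeasurableSpace α] [Countable ι] {μ : Measure α}
    [IsProbabilityMeasure μ] {E : ι → Set α} (hE : ∀ i, MeasurableSet (E i))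
    (h : ∀ i, μ (E i) = 1) : μ (⋂ i, E i) = 1 := by
  rw [← prob_compl_eq_zero_iff (.iInter hE), compl_iInter]
  exact measure_iUnion_null fun i => (prob_compl_eq_zero_iff (hE i)).2 (h i)

def shift {α : Type*} (ρ : ℕ → α) : ℕ → α := fun i => ρ (i + 1)

lemma measurable_shift : Measurable (shift : (ℕ → S) → ℕ → S) :=
  measurable_pi_lambda _ fun i => measurable_pi_apply (i + 1)

lemma preimage_shift_pi_Iic {α : Type*} (n : ℕ) (A : ℕ → Set α) :
    shift ⁻¹' (Iic n).pi A = (Iic (n + 1)).pi (fun i => Nat.casesOn i univ A) := by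
  ext ρ
  simp only [mem_preimage, Set.mem_pi, mem_Iic, shift]
  refine ⟨fun h i hi => ?_, fun h i hi => h (i + 1) (by omega)⟩
  cases i with
  | zero => trivial
  | succ i => exact h i (by omega)

section Markov

variable (κ : Kernel S S) [IsSFiniteKernel κ]

lemma measurable_cylProb (n : ℕ) {A : ℕ → Set S} (hA : ∀ i, MeasurableSet (A i)) :
    Measurable fun s => cylProb κ n (κ s) A := by
  induction n generalizing A with
  | zero => exact κ.measurable_coe (hA 0)
  | succ n ih => exact (ih fun i => hA (i + 1)).setLIntegral_kernel (hA 0)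

lemma cylProb_bind (n : ℕ) (μ : Measure S) {A : ℕ → Set S} (hA : ∀ i, MeasurableSet (A i)) :
    cylProb κ n (μ.bind κ) A = ∫⁻ s, cylProb κ n (κ s) A ∂μ := by
  cases n with
  | zero => exact Measure.bind_apply (hA 0) κ.aemeasurable
  | succ n =>
    have hf := (measurable_cylProb κ n fun i => hA (i + 1)).indicator (hA 0)
    simp only [cylProb]
    rw [← lintegral_indicator (hA 0), Measure.lintegral_bind κ.aemeasurable hf.aemeasurable]
    simp_rw [lintegral_indicator (hA 0)]

lemma cylProb_succ_casesOn_univ (n : ℕ) (μ : Measure S) {A : ℕ → Set S}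
    (hA : ∀ i, MeasurableSet (A i)) :
    cylProb κ (n + 1) μ (fun i => Nat.casesOn i univ A) = cylProb κ n (μ.bind κ) A := by
  rw [cylProb_bind κ n μ hA]
  exact setLIntegral_univ _

end Markov

lemma IsPathMeasure.apply_pi_Iic {κ : Kernel S S} {P : Measure S → Measure (ℕ → S)}
    (hP : IsPathMeasure κ P) (μ : Measure S) [IsProbabilityMeasure μ] (n : ℕ) {A : ℕ → Set S}
    (hA : ∀ i, MeasurableSet (A i)) : P μ ((Iic n).pi A) = cylProb κ n μ A :=
  (hP μ ‹_›).2 n A hA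

theorem IsPathMeasure.map_shift {κ : Kernel S S} [IsMarkovKernel κ]
    {P : Measure S → Measure (ℕ → S)} (hP : IsPathMeasure κ P) (μ : Measure S)
    [IsProbabilityMeasure μ] :
    (P μ).map shift = P (μ.bind κ) := by
  have := (hP μ ‹_›).1
  refine measure_ext_of_pi_Iic fun n A hA => ?_
  have hA' : ∀ i, MeasurableSet (Nat.casesOn i univ A : Set S) := fun i => by
    cases i
    exacts [.univ, hA _]
  rw [Measure.map_apply measurable_shift (.pi (to_countable _) fun i _ => hA i),
    preimage_shift_pi_Iic, hP.apply_pi_Iic μ _ hA', cylProb_succ_casesOn_univ κ n μ hA,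
    hP.apply_pi_Iic _ n hA]

lemma evFge_zero {α : Type*} (B : Set α) : evFge 0 B = evF B := by
  simp [evFge, evF]

lemma evFge_succ {α : Type*} (p : ℕ) (B : Set α) : evFge (p + 1) B = shift ⁻¹' evFge p B := by
  ext ρ
  simp only [evFge, mem_preimage, mem_ofPred_eq, shift]
  constructor
  · rintro ⟨k, hk, hkB⟩
    exact ⟨k - 1, by omega, by rwa [Nat.sub_add_cancel (by omega)]⟩
  · rintro ⟨k, hk, hkB⟩
    exact ⟨k + 1, by omega, hkB⟩

lemma evGF_eq_iInter_evFge {α : Type*} (B : Set α) : evGF B = ⋂ p, evFge p B := by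
  ext ρ
  simp [evGF, evFge]

lemma measurableSet_evFge (p : ℕ) {B : Set S} (hB : MeasurableSet B) :
    MeasurableSet (evFge p B) := by
  simp only [evFge, ofPred_exists]
  exact .iUnion fun k => .inter (.const _) (measurable_pi_apply k hB)

lemma IsPathMeasure.evFge_eq_one {κ : Kernel S S} [IsMarkovKernel κ]
    {P : Measure S → Measure (ℕ → S)} (hP : IsPathMeasure κ P) {B : Set S}
    (hB : MeasurableSet B) (hattr : ∀ μ : Measure S, IsProbabilityMeasure μ → P μ (evF B) = 1)
    (p : ℕ) (μ : Measure S) [IsProbabilityMeasure μ] : P μ (evFge p B) = 1 := by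
  induction p generalizing μ with
  | zero => rw [evFge_zero]; exact hattr μ ‹_›
  | succ p ih =>
    have := (hP μ ‹_›).1
    rw [evFge_succ, ← Measure.map_apply measurable_shift (measurableSet_evFge p hB),
      hP.map_shift]
    exact ih _

/-- if `B` is an attractor for the STS, then for every initial probability
measure `μ`, `Prob_μ(GF B) = 1`. -/
theorem statement_2 {S : Type*} [MeasurableSpace S]
    (κ : Kernel S S) [IsMarkovKernel κ]
    (P : Measure S → Measure (ℕ → S)) (hP : IsPathMeasure κ P)
    (B : Set S) (hB : MeasurableSet B)
    (hattr : ∀ μ : Measure S, IsProbabilityMeasure μ → P μ (evF B) = 1) :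
    ∀ μ : Measure S, IsProbabilityMeasure μ → P μ (evGF B) = 1 := by
  intro μ hμ
  have := (hP μ hμ).1
  rw [evGF_eq_iInter_evFge]
  exact measure_iInter_eq_one (fun p => measurableSet_evFge p hB)
    fun p => hP.evFge_eq_one hB hattr p μ

end STS
end

section
/- Let T = (S,Σ,κ) be an STS and let μ and ν be two probability measures on (S,Σ). If μ and ν are qualitatively equivalent (they have the same null sets), then the induced path measures Prob_μ and Prob_ν on S^ℕ are qualitatively equivalent: for every measurable set π of paths, Prob_μ(π) = 0 if and only if Prob_ν(π) = 0. -/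
open MeasureTheory ProbabilityTheory ENNReal Filter Topology

namespace STS

variable {S : Type*} [MeasurableSpace S]

/-! ### Auxiliary lemmas -/

/-- The "tail density": `cylProb κ n μ A = ∫⁻ s in A 0, gfun κ n A s ∂μ`. -/
noncomputable def gfun (κ : Kernel S S) : ℕ → (ℕ → Set S) → S → ℝ≥0∞
  | 0, _, _ => 1
  | n + 1, A, s => cylProb κ n (κ s) (fun i => A (i + 1))

lemma measurable_cylProb_kernel (κ : Kernel S S) [IsSFiniteKernel κ] :
    ∀ (n : ℕ) (A : ℕ → Set S), (∀ i, MeasurableSet (A i)) →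
      Measurable (fun s => cylProb κ n (κ s) A)
  | 0, A, hA => by
    simpa [cylProb] using κ.measurable_coe (hA 0)
  | n + 1, A, hA => by
    have hF : Measurable (fun t => cylProb κ n (κ t) (fun i => A (i + 1))) :=
      measurable_cylProb_kernel κ n _ (fun i => hA (i + 1))
    have heq : (fun s => cylProb κ (n + 1) (κ s) A)
        = fun s => ∫⁻ t, (A 0).indicator
            (fun t => cylProb κ n (κ t) (fun i => A (i + 1))) t ∂(κ s) := by
      funext s
      rw [lintegral_indicator (hA 0)]
      rfl
    rw [heq]
    exact Measurable.lintegral_kernel (hF.indicator (hA 0))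

lemma cylProb_eq_setLIntegral (κ : Kernel S S) (n : ℕ) (μ : Measure S) (A : ℕ → Set S) :
    cylProb κ n μ A = ∫⁻ s in A 0, gfun κ n A s ∂μ := by
  cases n with
  | zero => simp [cylProb, gfun, setLIntegral_one]
  | succ n => rfl

lemma measurable_gfun (κ : Kernel S S) [IsSFiniteKernel κ] (n : ℕ) (A : ℕ → Set S)
    (hA : ∀ i, MeasurableSet (A i)) : Measurable (gfun κ n A) := by
  cases n with
  | zero => exact measurable_const
  | succ n => exact measurable_cylProb_kernel κ n _ (fun i => hA (i + 1))

lemma gfun_tail_eq (κ : Kernel S S) (n : ℕ) (A A' : ℕ → Set S)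
    (h : ∀ i, A (i + 1) = A' (i + 1)) : gfun κ n A = gfun κ n A' := by
  cases n with
  | zero => rfl
  | succ n =>
    funext s
    show cylProb κ n (κ s) (fun i => A (i + 1)) = cylProb κ n (κ s) (fun i => A' (i + 1))
    congr 1
    exact funext h

lemma generateFrom_cylinders :
    MeasurableSpace.generateFrom
        {T : Set (ℕ → S) | ∃ (n : ℕ) (A : ℕ → Set S), (∀ i, MeasurableSet (A i)) ∧ T = {ρ | ∀ i ≤ n, ρ i ∈ A i}}
      = (inferInstance : MeasurableSpace (ℕ → S)) := by
  apply le_antisymm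
  · rw [MeasurableSpace.generateFrom_le_iff]
    rintro T ⟨n, A, hA, rfl⟩
    have : {ρ : ℕ → S | ∀ i ≤ n, ρ i ∈ A i}
        = ⋂ i ∈ Set.Iic n, (fun ρ : ℕ → S => ρ i) ⁻¹' A i := by
      ext ρ; simp
    rw [Set.mem_setOf_eq, this]
    exact MeasurableSet.biInter (Set.to_countable _)
      (fun i _ => measurable_pi_apply i (hA i))
  · have hmeas : ∀ i : ℕ, @Measurable _ _
        (MeasurableSpace.generateFrom
          {T : Set (ℕ → S) | ∃ (n : ℕ) (A : ℕ → Set S), (∀ i, MeasurableSet (A i)) ∧ T = {ρ | ∀ i ≤ n, ρ i ∈ A i}})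
        _ (fun ρ : ℕ → S => ρ i) := by
      intro i B hB
      apply MeasurableSpace.measurableSet_generateFrom
      refine ⟨i, fun j => if j = i then B else Set.univ, ?_, ?_⟩
      · intro j
        by_cases h : j = i <;> simp [h, hB]
      · ext ρ
        simp only [Set.mem_preimage, Set.mem_setOf_eq]
        constructor
        · intro h j _
          by_cases hj : j = i <;> simp [hj, h]
        · intro h
          simpa using h i le_rfl
    exact iSup_le fun i => measurable_iff_comap_le.mp (hmeas i)

lemma pathMeasure_withDensity (κ : Kernel S S) [IsMarkovKernel κ]
    (P : Measure S → Measure (ℕ → S)) (hP : IsPathMeasure κ P)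
    (ν : Measure S) (hν : IsProbabilityMeasure ν)
    (f : S → ℝ≥0∞) (hf : Measurable f) (hfp : IsProbabilityMeasure (ν.withDensity f)) :
    P (ν.withDensity f) = (P ν).withDensity (fun ρ => f (ρ 0)) := by
  have hPν := hP ν hν
  have hPf := hP _ hfp
  haveI := hPν.1
  haveI := hPf.1
  set C : Set (Set (ℕ → S)) :=
    {T | ∃ (n : ℕ) (A : ℕ → Set S), (∀ i, MeasurableSet (A i)) ∧ T = {ρ | ∀ i ≤ n, ρ i ∈ A i}} with hCdef
  have key : ∀ T ∈ C, P (ν.withDensity f) T = (P ν).withDensity (fun ρ => f (ρ 0)) T := by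
    rintro T ⟨n, A, hA, rfl⟩
    have hg : Measurable (gfun κ n A) := measurable_gfun κ n A hA
    have hcylmeas : MeasurableSet {ρ : ℕ → S | ∀ i ≤ n, ρ i ∈ A i} := by
      have : {ρ : ℕ → S | ∀ i ≤ n, ρ i ∈ A i}
          = ⋂ i ∈ Set.Iic n, (fun ρ : ℕ → S => ρ i) ⁻¹' A i := by ext ρ; simp
      rw [this]
      exact MeasurableSet.biInter (Set.to_countable _)
        (fun i _ => measurable_pi_apply i (hA i))
    -- left-hand side
    have hL : P (ν.withDensity f) {ρ | ∀ i ≤ n, ρ i ∈ A i}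
        = ∫⁻ s in A 0, f s * gfun κ n A s ∂ν := by
      rw [hPf.2 n A hA, cylProb_eq_setLIntegral,
        setLIntegral_withDensity_eq_setLIntegral_mul ν hf hg (hA 0)]
      rfl
    -- the pushforward of the restriction of `P ν` to the cylinder under `ρ ↦ ρ 0`
    have hmap : Measure.map (fun ρ : ℕ → S => ρ 0)
          ((P ν).restrict {ρ | ∀ i ≤ n, ρ i ∈ A i})
        = ν.withDensity ((A 0).indicator (gfun κ n A)) := by
      ext B hB
      rw [Measure.map_apply (measurable_pi_apply 0) hB,
        Measure.restrict_apply (measurable_pi_apply 0 hB)]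
      have hset : (fun ρ : ℕ → S => ρ 0) ⁻¹' B ∩ {ρ | ∀ i ≤ n, ρ i ∈ A i}
          = {ρ | ∀ i ≤ n, ρ i ∈ Function.update A 0 (A 0 ∩ B) i} := by
        ext ρ
        simp only [Set.mem_inter_iff, Set.mem_preimage, Set.mem_setOf_eq]
        constructor
        · intro ⟨hB0, hall⟩ i hi
          by_cases h0 : i = 0
          · subst h0
            simp [Function.update, Set.mem_inter_iff, hall 0 (Nat.zero_le n), hB0]
          · simpa [Function.update, h0] using hall i hi
        · intro h
          have h0 := h 0 (Nat.zero_le n)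
          simp only [Function.update_self] at h0
          refine ⟨h0.2, fun i hi => ?_⟩
          by_cases hi0 : i = 0
          · subst hi0; exact h0.1
          · simpa [Function.update, hi0] using h i hi
      have hA' : ∀ i, MeasurableSet (Function.update A 0 (A 0 ∩ B) i) := by
        intro i
        by_cases h0 : i = 0
        · subst h0; simpa using (hA 0).inter hB
        · simpa [Function.update, h0] using hA i
      rw [hset, hPν.2 n _ hA', cylProb_eq_setLIntegral]
      have hgeq : gfun κ n (Function.update A 0 (A 0 ∩ B)) = gfun κ n A :=
        gfun_tail_eq κ n _ _ (fun i => by simp [Function.update])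
      rw [hgeq, Function.update_self, withDensity_apply _ hB,
        setLIntegral_indicator (hA 0)]
    -- right-hand side
    rw [hL, withDensity_apply _ hcylmeas]
    symm
    calc ∫⁻ ρ in {ρ : ℕ → S | ∀ i ≤ n, ρ i ∈ A i}, f (ρ 0) ∂(P ν)
        = ∫⁻ s, f s ∂(Measure.map (fun ρ : ℕ → S => ρ 0)
            ((P ν).restrict {ρ | ∀ i ≤ n, ρ i ∈ A i})) :=
          (lintegral_map hf (measurable_pi_apply 0)).symm
      _ = ∫⁻ s, f s ∂(ν.withDensity ((A 0).indicator (gfun κ n A))) := by rw [hmap]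
      _ = ∫⁻ s, ((A 0).indicator (gfun κ n A) * f) s ∂ν :=
          lintegral_withDensity_eq_lintegral_mul ν (hg.indicator (hA 0)) hf
      _ = ∫⁻ s, (A 0).indicator (fun s => f s * gfun κ n A s) s ∂ν := by
          congr 1
          funext s
          by_cases hs : s ∈ A 0 <;> simp [hs, mul_comm]
      _ = ∫⁻ s in A 0, f s * gfun κ n A s ∂ν := lintegral_indicator (hA 0) _
  refine MeasureTheory.ext_of_generate_finite C generateFrom_cylinders.symm ?_ key ?_
  · -- π-system
    rintro T₁ ⟨n, A, hA, rfl⟩ T₂ ⟨m, B, hB, rfl⟩ -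
    refine ⟨max n m, fun i => (if i ≤ n then A i else Set.univ) ∩
      (if i ≤ m then B i else Set.univ), ?_, ?_⟩
    · intro i
      apply MeasurableSet.inter <;> first
        | (split <;> first | exact hA i | exact hB i | exact MeasurableSet.univ)
    · ext ρ
      simp only [Set.mem_inter_iff, Set.mem_setOf_eq]
      constructor
      · intro ⟨h₁, h₂⟩ i hi
        constructor
        · by_cases h : i ≤ n <;> simp [h, h₁ i]
        · by_cases h : i ≤ m <;> simp [h, h₂ i]
      · intro h
        constructor
        · intro i hi
          have := (h i (le_trans hi (le_max_left n m))).1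
          simpa [hi] using this
        · intro i hi
          have := (h i (le_trans hi (le_max_right n m))).2
          simpa [hi] using this
  · -- equality on univ
    have huniv : (Set.univ : Set (ℕ → S)) ∈ C :=
      ⟨0, fun _ => Set.univ, fun _ => MeasurableSet.univ, by ext ρ; simp⟩
    exact key _ huniv

lemma pathMeasure_absolutelyContinuous (κ : Kernel S S) [IsMarkovKernel κ]
    (P : Measure S → Measure (ℕ → S)) (hP : IsPathMeasure κ P)
    (μ ν : Measure S) (hμ : IsProbabilityMeasure μ) (hν : IsProbabilityMeasure ν)
    (hac : μ ≪ ν) : P μ ≪ P ν := by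
  have hwd : ν.withDensity (μ.rnDeriv ν) = μ := Measure.withDensity_rnDeriv_eq μ ν hac
  have hfp : IsProbabilityMeasure (ν.withDensity (μ.rnDeriv ν)) := hwd.symm ▸ hμ
  have := pathMeasure_withDensity κ P hP ν hν (μ.rnDeriv ν) (Measure.measurable_rnDeriv μ ν) hfp
  rw [hwd] at this
  rw [this]
  exact withDensity_absolutelyContinuous _ _

/-- qualitatively equivalent initial distributions induce qualitatively
equivalent path measures. -/
theorem statement_3 {S : Type*} [MeasurableSpace S]
    (κ : Kernel S S) [IsMarkovKernel κ]
    (P : Measure S → Measure (ℕ → S)) (hP : IsPathMeasure κ P)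
    (μ ν : Measure S) (hμ : IsProbabilityMeasure μ) (hν : IsProbabilityMeasure ν)
    (hequiv : QualEquiv μ ν) :
    QualEquiv (P μ) (P ν) := by
  have h₁ : μ ≪ ν :=
    Measure.AbsolutelyContinuous.mk fun A hA h0 => (hequiv A hA).mpr h0
  have h₂ : ν ≪ μ :=
    Measure.AbsolutelyContinuous.mk fun A hA h0 => (hequiv A hA).mp h0
  have H₁ : P μ ≪ P ν := pathMeasure_absolutelyContinuous κ P hP μ ν hμ hν h₁
  have H₂ : P ν ≪ P μ := pathMeasure_absolutelyContinuous κ P hP ν μ hν hμ h₂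
  intro A _
  exact ⟨fun h => H₂ h, fun h => H₁ h⟩

end STS
end

section
/- Let T₁ = (S₁,Σ₁,κ₁) and T₂ = (S₂,Σ₂,κ₂) be STSs and α : S₁ → S₂ a measurable map such that T₂ is an α-abstraction of T₁. Then for every probability measure μ on S₁ and all A, B ∈ Σ₂: Prob^{T₁}_μ(α⁻¹(A) U α⁻¹(B)) > 0 if and only if Prob^{T₂}_{α_# μ}(A U B) > 0. -/
open MeasureTheory ProbabilityTheory ENNReal Filter Topology

namespace STS

variable {S : Type*} [MeasurableSpace S]

/- The probability of `B' U B` is positive iff some cylinder `B'^k B` has positive probability.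
A cylinder probability is an iterated integral whose vanishing depends only on the null sets of
the measures involved, and one step of it applies `Ω` to the initial measure restricted to the
first set. The abstraction property transports exactly these null sets along `α`, so an
induction on the length of the cylinder shows that a preimage cylinder is null for `T₁` iff the
cylinder is null for `T₂`. -/

noncomputable def cylDensity (κ : Kernel S S) : ℕ → (ℕ → Set S) → S → ℝ≥0∞
  | 0, A => (A 0).indicator 1
  | n + 1, A => (A 0).indicator fun s => ∫⁻ t, cylDensity κ n (fun i => A (i + 1)) t ∂(κ s)

lemma measurable_cylDensity (κ : Kernel S S) (n : ℕ) {A : ℕ → Set S}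
    (hA : ∀ i, MeasurableSet (A i)) : Measurable (cylDensity κ n A) := by
  induction n generalizing A with
  | zero => exact measurable_one.indicator (hA 0)
  | succ n ih =>
    exact ((Measure.measurable_lintegral (ih fun i => hA (i + 1))).comp κ.measurable).indicator
      (hA 0)

lemma cylProb_eq_lintegral_cylDensity (κ : Kernel S S) (n : ℕ) (μ : Measure S)
    {A : ℕ → Set S} (hA : ∀ i, MeasurableSet (A i)) :
    cylProb κ n μ A = ∫⁻ s, cylDensity κ n A s ∂μ := by
  induction n generalizing μ A with
  | zero => simp [cylProb, cylDensity, lintegral_indicator_one (hA 0)]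
  | succ n ih =>
    rw [cylProb, cylDensity, lintegral_indicator (hA 0)]
    exact lintegral_congr fun s => ih (κ s) fun i => hA (i + 1)

lemma QualEquiv.cylProb_eq_zero_iff {μ ν : Measure S} (h : QualEquiv μ ν) (κ : Kernel S S)
    (n : ℕ) {A : ℕ → Set S} (hA : ∀ i, MeasurableSet (A i)) :
    cylProb κ n μ A = 0 ↔ cylProb κ n ν A = 0 := by
  have hf := measurable_cylDensity κ n hA
  simp only [cylProb_eq_lintegral_cylDensity κ n _ hA, lintegral_eq_zero_iff hf,
    EventuallyEq, ae_iff]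
  exact h _ (hf (measurableSet_singleton 0)).compl

lemma QualEquiv.smul {T : Type*} [MeasurableSpace T] {μ ν : Measure T} (h : QualEquiv μ ν)
    (c : ℝ≥0∞) : QualEquiv (c • μ) (c • ν) := fun A hA => by
  simp only [Measure.smul_apply, smul_eq_mul, mul_eq_zero, h A hA]

instance (κ : Kernel S S) [IsFiniteKernel κ] (μ : Measure S) [IsFiniteMeasure μ] :
    IsFiniteMeasure (Omega κ μ) :=
  inferInstanceAs (IsFiniteMeasure (κ ∘ₘ μ))

lemma cylProb_omega (κ : Kernel S S) (n : ℕ) (μ : Measure S) {A : ℕ → Set S}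
    (hA : ∀ i, MeasurableSet (A i)) :
    cylProb κ n (Omega κ μ) A = ∫⁻ s, cylProb κ n (κ s) A ∂μ := by
  have hf := measurable_cylDensity κ n hA
  rw [cylProb_eq_lintegral_cylDensity κ n _ hA, Omega,
    Measure.lintegral_bind κ.aemeasurable hf.aemeasurable]
  simp only [cylProb_eq_lintegral_cylDensity κ n _ hA]

lemma cylProb_succ (κ : Kernel S S) (n : ℕ) (μ : Measure S) {A : ℕ → Set S}
    (hA : ∀ i, MeasurableSet (A i)) :
    cylProb κ (n + 1) μ A = cylProb κ n (Omega κ (μ.restrict (A 0))) fun i => A (i + 1) :=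
  (cylProb_omega κ n _ fun i => hA (i + 1)).symm

def untilSeq {T : Type*} (n : ℕ) (B' B : Set T) : ℕ → Set T := fun i => if i < n then B' else B

lemma measurableSet_untilSeq (n : ℕ) {B' B : Set S} (hB' : MeasurableSet B')
    (hB : MeasurableSet B) (i : ℕ) : MeasurableSet (untilSeq n B' B i) := by
  unfold untilSeq; split <;> assumption

lemma preimage_untilSeq {T U : Type*} (f : T → U) (n : ℕ) (B' B : Set U) :
    (fun i => f ⁻¹' untilSeq n B' B i) = untilSeq n (f ⁻¹' B') (f ⁻¹' B) :=
  funext fun _ => apply_ite _ _ _ _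

lemma evU_eq_iUnion {T : Type*} (B' B : Set T) :
    evU B' B = ⋃ n, {ρ : ℕ → T | ∀ i ≤ n, ρ i ∈ untilSeq n B' B i} := by
  ext ρ
  simp only [evU, untilSeq, Set.mem_ofPred_eq, Set.mem_iUnion]
  refine exists_congr fun k => ⟨fun ⟨hB, hB'⟩ i hi => ?_, fun h => ⟨?_, fun j hj => ?_⟩⟩
  · rcases hi.lt_or_eq with hi | rfl
    · simpa [hi] using hB' i hi
    · simpa using hB
  · simpa using h k le_rfl
  · simpa [hj] using h j hj.le

lemma IsPathMeasure.evU_eq_zero_iff {κ : Kernel S S} {P : Measure S → Measure (ℕ → S)}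
    (hP : IsPathMeasure κ P) (μ : Measure S) [hμ : IsProbabilityMeasure μ] {B' B : Set S}
    (hB' : MeasurableSet B') (hB : MeasurableSet B) :
    P μ (evU B' B) = 0 ↔ ∀ n, cylProb κ n μ (untilSeq n B' B) = 0 := by
  rw [evU_eq_iUnion, measure_iUnion_null_iff]
  exact forall_congr' fun n => by rw [(hP μ hμ).2 n _ (measurableSet_untilSeq n hB' hB)]

section Abstraction

variable {S₁ S₂ : Type*} [MeasurableSpace S₁] [MeasurableSpace S₂]
  {κ₁ : Kernel S₁ S₁} {κ₂ : Kernel S₂ S₂} {α : S₁ → S₂}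

lemma IsAbstraction.qualEquiv_of_isFiniteMeasure (habs : IsAbstraction κ₁ κ₂ α)
    (μ : Measure S₁) [IsFiniteMeasure μ] :
    QualEquiv ((Omega κ₁ μ).map α) (Omega κ₂ (μ.map α)) := by
  rcases eq_zero_or_neZero μ with rfl | _
  · simp [QualEquiv, Omega]
  obtain ⟨c, ν, hν, rfl⟩ : ∃ c, ∃ ν : Measure S₁, IsProbabilityMeasure ν ∧ μ = c • ν :=
    ⟨μ Set.univ, (μ Set.univ)⁻¹ • μ, inferInstance, by
      rw [smul_smul, ENNReal.mul_inv_cancel (NeZero.ne _) (measure_ne_top _ _), one_smul]⟩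
  rw [Measure.map_smul, Omega, Omega, Measure.bind_smul, Measure.bind_smul, Measure.map_smul]
  exact (habs ν hν).smul c

lemma IsAbstraction.cylProb_preimage_eq_zero_iff [IsFiniteKernel κ₁]
    (habs : IsAbstraction κ₁ κ₂ α) (hα : Measurable α) (n : ℕ) (μ : Measure S₁)
    [IsFiniteMeasure μ] {A : ℕ → Set S₂} (hA : ∀ i, MeasurableSet (A i)) :
    cylProb κ₁ n μ (fun i => α ⁻¹' A i) = 0 ↔ cylProb κ₂ n (μ.map α) A = 0 := by
  induction n generalizing μ A with
  | zero => simp only [cylProb, Measure.map_apply hα (hA 0)]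
  | succ n ih =>
    have hA' : ∀ i, MeasurableSet (A (i + 1)) := fun i => hA (i + 1)
    rw [cylProb_succ κ₁ n μ fun i => hα (hA i), cylProb_succ κ₂ n _ hA,
      Measure.restrict_map hα (hA 0)]
    exact (ih _ hA').trans
      ((habs.qualEquiv_of_isFiniteMeasure (μ.restrict _)).cylProb_eq_zero_iff κ₂ n hA')

end Abstraction

theorem statement_7_general {S₁ S₂ : Type*} [MeasurableSpace S₁] [MeasurableSpace S₂]
    (κ₁ : Kernel S₁ S₁) [IsMarkovKernel κ₁] (κ₂ : Kernel S₂ S₂)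
    (P₁ : Measure S₁ → Measure (ℕ → S₁)) (hP₁ : IsPathMeasure κ₁ P₁)
    (P₂ : Measure S₂ → Measure (ℕ → S₂)) (hP₂ : IsPathMeasure κ₂ P₂)
    (α : S₁ → S₂) (hα : Measurable α) (habs : IsAbstraction κ₁ κ₂ α)
    (μ : Measure S₁) (hμ : IsProbabilityMeasure μ)
    (A B : Set S₂) (hA : MeasurableSet A) (hB : MeasurableSet B) :
    0 < P₁ μ (evU (α ⁻¹' A) (α ⁻¹' B)) ↔ 0 < P₂ (μ.map α) (evU A B) := by
  have : IsProbabilityMeasure (μ.map α) := Measure.isProbabilityMeasure_map hα.aemeasurable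
  rw [pos_iff_ne_zero, pos_iff_ne_zero, ne_eq, ne_eq, not_iff_not,
    hP₁.evU_eq_zero_iff μ (hα hA) (hα hB), hP₂.evU_eq_zero_iff _ hA hB]
  refine forall_congr' fun n => ?_
  rw [← preimage_untilSeq]
  exact habs.cylProb_preimage_eq_zero_iff hα n μ (measurableSet_untilSeq n hA hB)

/-- an `α`-abstraction preserves positivity of until-probabilities. -/
theorem statement_7 {S₁ S₂ : Type*} [MeasurableSpace S₁] [MeasurableSpace S₂]
    (κ₁ : Kernel S₁ S₁) [IsMarkovKernel κ₁] (κ₂ : Kernel S₂ S₂) [IsMarkovKernel κ₂]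
    (P₁ : Measure S₁ → Measure (ℕ → S₁)) (hP₁ : IsPathMeasure κ₁ P₁)
    (P₂ : Measure S₂ → Measure (ℕ → S₂)) (hP₂ : IsPathMeasure κ₂ P₂)
    (α : S₁ → S₂) (hα : Measurable α) (habs : IsAbstraction κ₁ κ₂ α)
    (μ : Measure S₁) (hμ : IsProbabilityMeasure μ)
    (A B : Set S₂) (hA : MeasurableSet A) (hB : MeasurableSet B) :
    0 < P₁ μ (evU (α ⁻¹' A) (α ⁻¹' B)) ↔ 0 < P₂ (μ.map α) (evU A B) :=
  statement_7_general κ₁ κ₂ P₁ hP₁ P₂ hP₂ α hα habs μ hμ A B hA hB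

end STS
end

section
/- Let T₁ = (S₁,Σ₁,κ₁) be an STS, T₂ = (S₂,2^{S₂},κ₂) a finite Markov chain (S₂ finite), and α : S₁ → S₂ measurable, with T₂ an α-abstraction of T₁. Fix a probability measure μ on S₁ and assume T₁ is fair from μ w.r.t. every α-closed set α⁻¹(B), B ⊆ S₂. Then T₁ is decisive from μ w.r.t. every α-closed set: for every B ⊆ S₂, Prob^{T₁}_μ(F α⁻¹(B) ∪ F C̃) = 1, where C̃ is the avoid-set of α⁻¹(B) in T₁. -/
open MeasureTheory ProbabilityTheory ENNReal Filter Topology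

/-! Two facts about the abstraction drive the proof. First, a `κ₂`-step `t → t'` of positive
probability makes `α⁻¹{t}` a `PreProb`-predecessor of `α⁻¹{t'}`, so by fairness almost every
path visiting the class of `t` infinitely often also visits the class of `t'` infinitely often.
Second, the states of `S₂` from which `B` is unreachable form a closed set whose preimage is
absorbing for `κ₁`, hence lies in the avoid-set of `α⁻¹ B`. Since `S₂` is finite, every path
visits some class `α⁻¹{t}` infinitely often: if `B` is reachable from `t`, fairness propagates
the infinitely many visits along a path to `B`; otherwise the path is already in the avoid-set. -/

namespace STS

variable {S : Type*}

lemma evF_mono {B B' : Set S} (h : B ⊆ B') : evF B ⊆ evF B' :=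
  fun _ ⟨k, hk⟩ => ⟨k, h hk⟩

lemma evGF_subset_evF (B : Set S) : evGF B ⊆ evF B :=
  fun _ h => (h 0).imp fun _ => And.right

lemma exists_mem_evGF_singleton [Finite S] (ρ : ℕ → S) : ∃ t, ρ ∈ evGF {t} := by
  obtain ⟨t, ht⟩ := Finite.exists_infinite_fiber ρ
  refine ⟨t, fun n => ?_⟩
  obtain ⟨k, hk, hnk⟩ := (Set.infinite_coe_iff.1 ht).exists_gt n
  exact ⟨k, hnk.le, hk⟩

lemma mem_evGF_singleton_of_reflTransGen {r : S → S → Prop} {ρ : ℕ → S}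
    (hρ : ∀ t t', r t t' → ρ ∈ evGF {t} → ρ ∈ evGF {t'}) {t t' : S}
    (h : Relation.ReflTransGen r t t') : ρ ∈ evGF {t} → ρ ∈ evGF {t'} := by
  induction h with
  | refl => exact id
  | tail _ hst ih => exact hρ _ _ hst ∘ ih

section Measurable

variable [MeasurableSpace S]

lemma measurableSet_evGF {B : Set S} (hB : MeasurableSet B) : MeasurableSet (evGF B) := by
  have : evGF B = ⋂ n, ⋃ k, ⋃ (_ : n ≤ k), (fun ρ : ℕ → S => ρ k) ⁻¹' B := by
    ext ρ; simp [evGF]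
  rw [this]
  exact .iInter fun n => .iUnion fun k => .iUnion fun _ => measurable_pi_apply k hB

lemma Fair.evGF_ae_le {P : Measure S → Measure (ℕ → S)} {μ : Measure S} {B B' : Set S}
    [IsFiniteMeasure (P μ)] (hfair : Fair P μ B) (hB : MeasurableSet B)
    (hB' : B' ∈ PreProb P B) : evGF B' ≤ᵐ[P μ] evGF B := by
  rcases eq_zero_or_pos (P μ (evGF B')) with hnull | hpos
  · exact ae_le_set.2 (measure_mono_null Set.sdiff_subset hnull)
  · have hmeas := (measurableSet_evGF hB).inter (measurableSet_evGF hB'.1)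
    have hae : (evGF B ∩ evGF B' : Set (ℕ → S)) =ᵐ[P μ] evGF B' :=
      ae_eq_of_subset_of_measure_ge Set.inter_subset_right (hfair B' hB' hpos).ge
        hmeas.nullMeasurableSet (measure_ne_top _ _)
    exact hae.symm.le.trans (Eventually.of_forall fun _ => And.left)

lemma omega_dirac (κ : Kernel S S) (s : S) : Omega κ (Measure.dirac s) = κ s :=
  Measure.dirac_bind κ.measurable s

section PathMeasure

variable {κ : Kernel S S} {P : Measure S → Measure (ℕ → S)}

lemma IsPathMeasure.measure_mem_zero_and_mem_one (hP : IsPathMeasure κ P) (μ : Measure S)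
    [IsProbabilityMeasure μ] {A B : Set S} (hA : MeasurableSet A) (hB : MeasurableSet B) :
    P μ {ρ | ρ 0 ∈ A ∧ ρ 1 ∈ B} = ∫⁻ s in A, κ s B ∂μ := by
  have hcyl := (hP μ inferInstance).2 1 (fun i => if i = 0 then A else B)
    (fun i => by split_ifs <;> assumption)
  convert hcyl using 2
  · ext ρ; simp [Nat.le_one_iff_eq_zero_or_eq_one]
  · simp [cylProb]

variable [IsMarkovKernel κ] {D : Set S} (hD : MeasurableSet D) (hDabs : ∀ s ∈ D, κ s Dᶜ = 0)
include hD hDabs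

lemma cylProb_const_eq_one (n : ℕ) (μ : Measure S) [IsProbabilityMeasure μ] (hμ : μ Dᶜ = 0) :
    cylProb κ n μ (fun _ => D) = 1 := by
  induction n generalizing μ with
  | zero => exact (prob_compl_eq_zero_iff hD).1 hμ
  | succ n ih =>
    calc cylProb κ (n + 1) μ (fun _ => D) = ∫⁻ s in D, cylProb κ n (κ s) (fun _ => D) ∂μ := rfl
      _ = ∫⁻ _ in D, 1 ∂μ := setLIntegral_congr_fun hD fun s hs => ih (κ s) (hDabs s hs)
      _ = 1 := by rw [setLIntegral_one, (prob_compl_eq_zero_iff hD).1 hμ]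

lemma IsPathMeasure.measure_evF_compl_eq_zero (hP : IsPathMeasure κ P) (μ : Measure S)
    [IsProbabilityMeasure μ] (hμ : μ Dᶜ = 0) : P μ (evF Dᶜ) = 0 := by
  have := (hP μ inferInstance).1
  refine measure_mono_null (t := ⋃ k, {ρ : ℕ → S | ∀ i ≤ k, ρ i ∈ D}ᶜ)
    (fun ρ ⟨k, hk⟩ => Set.mem_iUnion.2 ⟨k, fun hstay => hk (hstay k le_rfl)⟩)
    (measure_iUnion_null fun k => ?_)
  have hcyl : MeasurableSet {ρ : ℕ → S | ∀ i ≤ k, ρ i ∈ D} := by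
    simp only [Set.ofPred_forall]
    exact .iInter fun i => .iInter fun _ => measurable_pi_apply i hD
  rw [prob_compl_eq_zero_iff hcyl, (hP μ inferInstance).2 k (fun _ => D) fun _ => hD]
  exact cylProb_const_eq_one hD hDabs k μ hμ

lemma IsPathMeasure.subset_avoid (hP : IsPathMeasure κ P) {B : Set S} (hDB : Disjoint D B) :
    D ⊆ avoid P B := fun s hs =>
  have hs' : Measure.dirac s Dᶜ = 0 := by
    rw [Measure.dirac_apply' _ hD.compl, Set.indicator_of_notMem (not_not.2 hs)]
  measure_mono_null (evF_mono hDB.subset_compl_left)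
    (hP.measure_evF_compl_eq_zero hD hDabs _ hs')

end PathMeasure

def reachable (κ : Kernel S S) (B : Set S) : Set S :=
  {t | ∃ b ∈ B, Relation.ReflTransGen (fun t t' => κ t {t'} ≠ 0) t b}

lemma subset_reachable (κ : Kernel S S) (B : Set S) : B ⊆ reachable κ B :=
  fun b hb => ⟨b, hb, .refl⟩

lemma kernel_reachable_eq_zero [Countable S] [MeasurableSingletonClass S] (κ : Kernel S S)
    (B : Set S) {u : S} (hu : u ∉ reachable κ B) : κ u (reachable κ B) = 0 := by
  rw [← Set.biUnion_of_singleton (reachable κ B), measure_biUnion_null_iff (Set.to_countable _)]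
  rintro t ⟨b, hb, htb⟩
  by_contra hut
  exact hu ⟨b, hb, htb.head hut⟩

end Measurable

section Abstraction

variable {S₁ S₂ : Type*} [MeasurableSpace S₁] [MeasurableSpace S₂]
  {κ₁ : Kernel S₁ S₁} {κ₂ : Kernel S₂ S₂} {α : S₁ → S₂}

lemma IsAbstraction.kernel_preimage_eq_zero_iff (habs : IsAbstraction κ₁ κ₂ α)
    (hα : Measurable α) {A : Set S₂} (hA : MeasurableSet A) (s : S₁) :
    κ₁ s (α ⁻¹' A) = 0 ↔ κ₂ (α s) A = 0 := by
  have := habs (Measure.dirac s) inferInstance A hA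
  rwa [omega_dirac, Measure.map_dirac' hα, omega_dirac, Measure.map_apply hα hA] at this

lemma IsAbstraction.preimage_mem_preProb [IsMarkovKernel κ₁]
    {P₁ : Measure S₁ → Measure (ℕ → S₁)} (habs : IsAbstraction κ₁ κ₂ α) (hα : Measurable α)
    (hP₁ : IsPathMeasure κ₁ P₁) {A A' : Set S₂} (hA : MeasurableSet A)
    (hA' : MeasurableSet A') (hstep : ∀ t ∈ A, κ₂ t A' ≠ 0) :
    α ⁻¹' A ∈ PreProb P₁ (α ⁻¹' A') := by
  refine ⟨hα hA, fun μ' _ hμ' => ?_⟩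
  rw [hP₁.measure_mem_zero_and_mem_one μ' (hα hA) (hα hA'),
    setLIntegral_pos_iff (κ₁.measurable_coe (hα hA'))]
  have hsupp : Function.support (fun s => κ₁ s (α ⁻¹' A')) ∩ α ⁻¹' A = α ⁻¹' A :=
    Set.inter_eq_right.2 fun s hs => mt (habs.kernel_preimage_eq_zero_iff hα hA' s).1 (hstep _ hs)
  simp [hsupp, hμ']

end Abstraction

theorem statement_12_general {S₁ S₂ : Type*} [MeasurableSpace S₁] [MeasurableSpace S₂]
    [Finite S₂] [MeasurableSingletonClass S₂]
    (κ₁ : Kernel S₁ S₁) [IsMarkovKernel κ₁] (κ₂ : Kernel S₂ S₂)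
    (P₁ : Measure S₁ → Measure (ℕ → S₁)) (hP₁ : IsPathMeasure κ₁ P₁)
    (α : S₁ → S₂) (hα : Measurable α) (habs : IsAbstraction κ₁ κ₂ α)
    (μ : Measure S₁) (hμ : IsProbabilityMeasure μ)
    (hfair : ∀ B : Set S₂, Fair P₁ μ (α ⁻¹' B)) :
    ∀ B : Set S₂, Decisive P₁ μ (α ⁻¹' B) := by
  have := (hP₁ μ hμ).1
  have mS₂ (A : Set S₂) : MeasurableSet A := A.toFinite.measurableSet
  intro B
  have hstep : ∀ᵐ ρ ∂P₁ μ, ∀ t t', κ₂ t {t'} ≠ 0 → α ∘ ρ ∈ evGF {t} → α ∘ ρ ∈ evGF {t'} := by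
    simp only [ae_all_iff]
    intro t t' htt'
    exact (hfair {t'}).evGF_ae_le (hα (mS₂ _))
      (habs.preimage_mem_preProb hα hP₁ (mS₂ _) (mS₂ _) (by simpa using htt'))
  have havoid : α ⁻¹' (reachable κ₂ B)ᶜ ⊆ avoid P₁ (α ⁻¹' B) :=
    hP₁.subset_avoid (hα (mS₂ _))
      (fun s hs => by
        rw [← Set.preimage_compl, compl_compl, habs.kernel_preimage_eq_zero_iff hα (mS₂ _)]
        exact kernel_reachable_eq_zero κ₂ B hs)
      ((disjoint_compl_left.preimage α).mono_right (Set.preimage_mono (subset_reachable κ₂ B)))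
  suffices ∀ᵐ ρ ∂P₁ μ, ρ ∈ evF (α ⁻¹' B) ∪ evF (avoid P₁ (α ⁻¹' B)) from
    (measure_congr (ae_eq_univ.2 (ae_iff.1 this))).trans measure_univ
  filter_upwards [hstep] with ρ hρ
  obtain ⟨t, ht⟩ := exists_mem_evGF_singleton (α ∘ ρ)
  by_cases htR : t ∈ reachable κ₂ B
  · obtain ⟨b, hb, htb⟩ := htR
    exact .inl (evF_mono (Set.preimage_mono (Set.singleton_subset_iff.2 hb))
      (evGF_subset_evF _ (mem_evGF_singleton_of_reflTransGen hρ htb ht)))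
  · obtain ⟨k, -, hk : α (ρ k) = t⟩ := ht 0
    exact .inr ⟨k, havoid (show α (ρ k) ∉ reachable κ₂ B from hk ▸ htR)⟩

/-- if `T₂` is a finite Markov chain which is an `α`-abstraction of `T₁`, and
`T₁` is fair from `μ` w.r.t. every `α`-closed set, then `T₁` is decisive from `μ` w.r.t.
every `α`-closed set. -/
theorem statement_12 {S₁ S₂ : Type*} [MeasurableSpace S₁] [MeasurableSpace S₂]
    [Finite S₂] [MeasurableSingletonClass S₂]
    (κ₁ : Kernel S₁ S₁) [IsMarkovKernel κ₁] (κ₂ : Kernel S₂ S₂) [IsMarkovKernel κ₂]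
    (P₁ : Measure S₁ → Measure (ℕ → S₁)) (hP₁ : IsPathMeasure κ₁ P₁)
    (P₂ : Measure S₂ → Measure (ℕ → S₂)) (hP₂ : IsPathMeasure κ₂ P₂)
    (α : S₁ → S₂) (hα : Measurable α) (habs : IsAbstraction κ₁ κ₂ α)
    (μ : Measure S₁) (hμ : IsProbabilityMeasure μ)
    (hfair : ∀ B : Set S₂, Fair P₁ μ (α ⁻¹' B)) :
    ∀ B : Set S₂, Decisive P₁ μ (α ⁻¹' B) :=
  statement_12_general κ₁ κ₂ P₁ hP₁ α hα habs μ hμ hfair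

end STS
end
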